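/- arXiv:2506.01514 — 5 statements merged into one kernel-verified Lean document; each statement's English description precedes it below -/
import Mathlib

section
/- For every invertible n×n real matrix g and all n×n real matrices ζ and X, letting h := g·exp(ζ), one has h · (∫₀¹ exp(−sζ) X exp(sζ) ds) · h⁻¹ = ∫₀¹ exp(s·(gζg⁻¹)) · (gXg⁻¹) · exp(−s·(gζg⁻¹)) ds. Equivalently, as linear maps on n×n real matrices, Ad_{g·exp(ζ)} ∘ J_ζ = J̄_{Ad_g ζ} ∘ Ad_g, where J̄_μ := J_{−μ} is the left group Jacobian. -/
/-!
STATEMENT 2: For every invertible n×n real matrix g and all n×n real matrices ζ and X,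
letting h := g·exp(ζ), one has
h · (∫₀¹ exp(−sζ) X exp(sζ) ds) · h⁻¹
  = ∫₀¹ exp(s·(gζg⁻¹)) · (gXg⁻¹) · exp(−s·(gζg⁻¹)) ds.
Equivalently, Ad_{g·exp(ζ)} ∘ J_ζ = J̄_{Ad_g ζ} ∘ Ad_g, where J̄_μ := J_{−μ}.
-/

open scoped Matrix

attribute [local instance] Matrix.frobeniusNormedAddCommGroup Matrix.frobeniusNormedSpace

/-- The matrix exponential on `n × n` real matrices. -/
noncomputable def mexp {n : Type*} [Fintype n] [DecidableEq n] (A : Matrix n n ℝ) :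
    Matrix n n ℝ :=
  NormedSpace.exp A

/-!
Since `Ad_{g exp ζ} = Ad_g ∘ Ad_{exp ζ}`, the identity splits in two. First,
`exp ζ · exp (-sζ) = exp ((1 - s)ζ)`, so `Ad_{exp ζ}` turns the integrand of `J_ζ X` at `s` into
that of `J̄_ζ X` at `1 - s`, and the substitution `s ↦ 1 - s` gives `Ad_{exp ζ} ∘ J_ζ = J̄_ζ`.
Second, `Ad_g` is a continuous algebra automorphism, so it passes under the integral and through
the exponential: `Ad_g ∘ J̄_ζ = J̄_{Ad_g ζ} ∘ Ad_g`.
-/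

open NormedSpace

theorem intervalIntegral.integral_const_mul_mul_const {A : Type*} [NormedRing A]
    [NormedAlgebra ℝ A] [CompleteSpace A] {f : ℝ → A} {a b : ℝ}
    (hf : IntervalIntegrable f MeasureTheory.volume a b) (c d : A) :
    ∫ x in a..b, c * f x * d = c * (∫ x in a..b, f x) * d := by
  simpa [mul_assoc] using (((ContinuousLinearMap.mul ℝ A c).comp
    ((ContinuousLinearMap.mul ℝ A).flip d)).intervalIntegral_comp_comm hf)

section Jacobian

variable {𝔸 : Type*} [NormedRing 𝔸] [NormedAlgebra ℝ 𝔸] [NormedAlgebra ℚ 𝔸] [CompleteSpace 𝔸]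

noncomputable def rightJacobian (ζ X : 𝔸) : 𝔸 :=
  ∫ s in (0:ℝ)..1, exp (-(s • ζ)) * X * exp (s • ζ)

noncomputable def leftJacobian (ζ X : 𝔸) : 𝔸 :=
  ∫ s in (0:ℝ)..1, exp (s • ζ) * X * exp (-(s • ζ))

theorem exp_mul_exp_neg_smul (ζ : 𝔸) (s : ℝ) :
    exp ζ * exp (-(s • ζ)) = exp ((1 - s) • ζ) := by
  rw [← exp_add_of_commute ((Commute.refl ζ).smul_right s).neg_right, sub_smul, one_smul,
    sub_eq_add_neg]

theorem exp_smul_mul_exp_neg (ζ : 𝔸) (s : ℝ) :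
    exp (s • ζ) * exp (-ζ) = exp (-((1 - s) • ζ)) := by
  rw [← exp_add_of_commute ((Commute.refl ζ).smul_left s).neg_right, sub_smul, one_smul,
    neg_sub, sub_eq_add_neg]

theorem exp_mul_rightJacobian_mul_exp_neg (ζ X : 𝔸) :
    exp ζ * rightJacobian ζ X * exp (-ζ) = leftJacobian ζ X := by
  have hint : IntervalIntegrable (fun s : ℝ => exp (-(s • ζ)) * X * exp (s • ζ))
      MeasureTheory.volume 0 1 :=
    Continuous.intervalIntegrable (by fun_prop) 0 1
  calc exp ζ * rightJacobian ζ X * exp (-ζ)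
      = ∫ s in (0:ℝ)..1, exp ((1 - s) • ζ) * X * exp (-((1 - s) • ζ)) := by
        rw [rightJacobian, ← intervalIntegral.integral_const_mul_mul_const hint]
        refine intervalIntegral.integral_congr fun s _ => ?_
        simp only [mul_assoc]
        rw [← mul_assoc (exp ζ), exp_mul_exp_neg_smul, ← exp_smul_mul_exp_neg]
    _ = leftJacobian ζ X := by
        rw [leftJacobian]
        simpa using intervalIntegral.integral_comp_sub_left
          (fun s : ℝ => exp (s • ζ) * X * exp (-(s • ζ))) (1 : ℝ) (a := 0) (b := 1)

theorem units_mul_leftJacobian_mul_inv (u : 𝔸ˣ) (ζ X : 𝔸) :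
    u * leftJacobian ζ X * ↑u⁻¹ = leftJacobian (u * ζ * ↑u⁻¹) (u * X * ↑u⁻¹) := by
  have hint : IntervalIntegrable (fun s : ℝ => exp (s • ζ) * X * exp (-(s • ζ)))
      MeasureTheory.volume 0 1 :=
    Continuous.intervalIntegrable (by fun_prop) 0 1
  rw [leftJacobian, ← intervalIntegral.integral_const_mul_mul_const hint]
  refine intervalIntegral.integral_congr fun s _ => ?_
  have hsmul : s • ((u : 𝔸) * ζ * ↑u⁻¹) = u * (s • ζ) * ↑u⁻¹ := by
    rw [mul_smul_comm, smul_mul_assoc]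
  rw [hsmul, ← neg_mul, ← mul_neg, exp_units_conj, exp_units_conj]
  simp only [mul_assoc, Units.inv_mul_cancel_left]

end Jacobian

attribute [local instance] Matrix.frobeniusNormedRing Matrix.frobeniusNormedAlgebra

theorem Ad_mul_exp_comp_rightJacobian
    {n : Type*} [Fintype n] [DecidableEq n] (g : Matrix n n ℝ) (hg : IsUnit g)
    (ζ X : Matrix n n ℝ) :
    (g * mexp ζ) * (∫ s in (0:ℝ)..1, mexp (-(s • ζ)) * X * mexp (s • ζ)) * (g * mexp ζ)⁻¹
      = ∫ s in (0:ℝ)..1,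
          mexp (s • (g * ζ * g⁻¹)) * (g * X * g⁻¹) * mexp (-(s • (g * ζ * g⁻¹))) := by
  have hinv : (g * mexp ζ)⁻¹ = mexp (-ζ) * g⁻¹ := by
    rw [Matrix.mul_inv_rev, mexp, mexp, Matrix.exp_neg]
  calc (g * mexp ζ) * rightJacobian ζ X * (g * mexp ζ)⁻¹
      = g * (mexp ζ * rightJacobian ζ X * mexp (-ζ)) * g⁻¹ := by
        rw [hinv]; simp only [mul_assoc]
    _ = g * leftJacobian ζ X * g⁻¹ :=
        congrArg (g * · * g⁻¹) (exp_mul_rightJacobian_mul_exp_neg ζ X)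
    _ = leftJacobian (g * ζ * g⁻¹) (g * X * g⁻¹) := by
        simpa [Matrix.coe_units_inv] using units_mul_leftJacobian_mul_inv hg.unit ζ X
end

section
/- Let P be a k×k real matrix, C an m×k real matrix, R an m×m real matrix such that C P Cᵀ + R is invertible, and let S be an invertible k×k real matrix. Define P̄ := S P Sᵀ, C̄ := C S⁻¹, K := P Cᵀ (C P Cᵀ + R)⁻¹, and K̄ := P̄ C̄ᵀ (C̄ P̄ C̄ᵀ + R)⁻¹. Then: (i) C̄ P̄ C̄ᵀ = C P Cᵀ (so C̄ P̄ C̄ᵀ + R is invertible); (ii) K̄ = S K; and (iii) (I − K̄ C̄) P̄ = S (I − K C) P Sᵀ. -/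
/-!
STATEMENT 9: Let P be a k×k real matrix, C an m×k real matrix, R an m×m real matrix such
that C P Cᵀ + R is invertible, and let S be an invertible k×k real matrix.  Define
P̄ := S P Sᵀ, C̄ := C S⁻¹, K := P Cᵀ (C P Cᵀ + R)⁻¹ and K̄ := P̄ C̄ᵀ (C̄ P̄ C̄ᵀ + R)⁻¹.  Then:
(i) C̄ P̄ C̄ᵀ = C P Cᵀ (so C̄ P̄ C̄ᵀ + R is invertible);
(ii) K̄ = S K; and
(iii) (I − K̄ C̄) P̄ = S (I − K C) P Sᵀ.
-/

open Matrix

theorem kalman_gain_change_of_variables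
    {k m : Type*} [Fintype k] [DecidableEq k] [Fintype m] [DecidableEq m]
    (P : Matrix k k ℝ) (C : Matrix m k ℝ) (R : Matrix m m ℝ) (S : Matrix k k ℝ)
    (hT : IsUnit (C * P * Cᵀ + R)) (hS : IsUnit S) :
    let Pb := S * P * Sᵀ
    let Cb := C * S⁻¹
    let K := P * Cᵀ * (C * P * Cᵀ + R)⁻¹
    let Kb := Pb * Cbᵀ * (Cb * Pb * Cbᵀ + R)⁻¹
    Cb * Pb * Cbᵀ = C * P * Cᵀ ∧ IsUnit (Cb * Pb * Cbᵀ + R) ∧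
      Kb = S * K ∧ (1 - Kb * Cb) * Pb = S * ((1 - K * C) * P) * Sᵀ := by
  intro Pb Cb K Kb
  have hSd : IsUnit S.det := (isUnit_iff_isUnit_det S).mp hS
  have hi : S⁻¹ * S = 1 := nonsing_inv_mul S hSd
  have hi2 : S * S⁻¹ = 1 := mul_nonsing_inv S hSd
  have hti : Sᵀ * S⁻¹ᵀ = 1 := by
    rw [← transpose_mul, hi, transpose_one]
  have hPbCbT : Pb * Cbᵀ = S * (P * Cᵀ) := by
    simp only [Pb, Cb, transpose_mul, Matrix.mul_assoc]
    rw [show Sᵀ * (S⁻¹ᵀ * Cᵀ) = Cᵀ by rw [← Matrix.mul_assoc, hti, Matrix.one_mul]]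
  have h1 : Cb * Pb * Cbᵀ = C * P * Cᵀ := by
    rw [Matrix.mul_assoc, hPbCbT]
    simp only [Cb, Matrix.mul_assoc]
    rw [show S⁻¹ * (S * (P * Cᵀ)) = P * Cᵀ by rw [← Matrix.mul_assoc, hi, Matrix.one_mul]]
  have h2 : IsUnit (Cb * Pb * Cbᵀ + R) := by rw [h1]; exact hT
  have h3 : Kb = S * K := by
    show Pb * Cbᵀ * (Cb * Pb * Cbᵀ + R)⁻¹ = S * K
    rw [h1, hPbCbT, Matrix.mul_assoc]
  constructor
  · exact h1
  constructor
  · exact h2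
  constructor
  · exact h3
  · have hCbPb : Cb * Pb = C * (P * Sᵀ) := by
      simp only [Cb, Pb, Matrix.mul_assoc]
      rw [show S⁻¹ * (S * (P * Sᵀ)) = P * Sᵀ by rw [← Matrix.mul_assoc, hi, Matrix.one_mul]]
    rw [Matrix.sub_mul, Matrix.one_mul, Matrix.mul_assoc, hCbPb, h3]
    show Pb - S * K * (C * (P * Sᵀ)) = S * ((1 - K * C) * P) * Sᵀ
    rw [Matrix.sub_mul, Matrix.one_mul, Matrix.mul_sub, Matrix.sub_mul]
    simp only [Pb, Matrix.mul_assoc]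
end

section
/- Let S, P : ℝ → (k×k real matrices) be curves differentiable at t₀, with S(t₀) invertible, and suppose there exist k×k real matrices M, A and matrices B (k×s), Q (s×s) such that S'(t₀) = S(t₀)·M and P'(t₀) = A·P(t₀) + P(t₀)·Aᵀ + B·Q·Bᵀ. Then the curve t ↦ S(t)·P(t)·S(t)ᵀ has derivative at t₀ equal to Ā·P̄ + P̄·Āᵀ + B̄·Q·B̄ᵀ, where P̄ := S(t₀)·P(t₀)·S(t₀)ᵀ, Ā := S(t₀)·(A + M)·S(t₀)⁻¹, and B̄ := S(t₀)·B. -/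
/-!
By the product rule the derivative of `S P Sᵀ` is `S' P Sᵀ + S P' Sᵀ + S P S'ᵀ`, which for
`S' = S M` equals `S F_{A+M,B}(P) Sᵀ`, where `F_{A,B}(P) = A P + P Aᵀ + B Q Bᵀ`. Conjugation by
an invertible `S` transforms this vector field covariantly: `S F_{A,B}(P) Sᵀ = F_{SAS⁻¹,SB}(S P Sᵀ)`.
-/

open Matrix

attribute [local instance] Matrix.frobeniusNormedAddCommGroup Matrix.frobeniusNormedSpace

attribute [local instance] Matrix.frobeniusNormedRing Matrix.frobeniusNormedAlgebra

section Calculus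

variable {𝕜 : Type*} {m n : Type*} [Fintype m] [Fintype n]

theorem HasDerivAt.matrix_transpose [NontriviallyNormedField 𝕜] {f : 𝕜 → Matrix m n 𝕜}
    {f' : Matrix m n 𝕜} {t : 𝕜} (hf : HasDerivAt f f' t) :
    HasDerivAt (fun t => (f t)ᵀ) f'ᵀ t :=
  (⟨(transposeLinearEquiv m n 𝕜 𝕜).toLinearMap, continuous_id.matrix_transpose⟩ :
    Matrix m n 𝕜 →L[𝕜] Matrix n m 𝕜).hasFDerivAt.comp_hasDerivAt (f := f) t hf

theorem HasDerivAt.matrix_mul_mul_transpose [RCLike 𝕜] [DecidableEq n]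
    {S P : 𝕜 → Matrix n n 𝕜} {S' P' : Matrix n n 𝕜} {t : 𝕜}
    (hS : HasDerivAt S S' t) (hP : HasDerivAt P P' t) :
    HasDerivAt (fun t => S t * P t * (S t)ᵀ)
      (S' * P t * (S t)ᵀ + S t * P' * (S t)ᵀ + S t * P t * S'ᵀ) t :=
  ((hS.mul hP).mul hS.matrix_transpose).congr_deriv (by simp only [add_mul, Pi.mul_apply])

end Calculus

namespace Matrix

variable {R : Type*} [CommRing R] {n m : Type*} [Fintype n] [Fintype m]

def riccatiField (A : Matrix n n R) (B : Matrix n m R) (Q : Matrix m m R) (P : Matrix n n R) :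
    Matrix n n R :=
  A * P + P * Aᵀ + B * Q * Bᵀ

theorem riccatiField_add_left (A M : Matrix n n R) (B : Matrix n m R) (Q : Matrix m m R)
    (P : Matrix n n R) :
    riccatiField (A + M) B Q P = riccatiField A B Q P + M * P + P * Mᵀ := by
  simp only [riccatiField, transpose_add, add_mul, mul_add]
  abel

theorem riccatiField_conj [DecidableEq n] {S : Matrix n n R} (hS : IsUnit S) (A : Matrix n n R)
    (B : Matrix n m R) (Q : Matrix m m R) (P : Matrix n n R) :
    riccatiField (S * A * S⁻¹) (S * B) Q (S * P * Sᵀ) = S * riccatiField A B Q P * Sᵀ := by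
  have hdet : IsUnit S.det := (isUnit_iff_isUnit_det S).mp hS
  have hdetT : IsUnit Sᵀ.det := by rwa [det_transpose]
  simp only [riccatiField, transpose_mul, transpose_nonsing_inv, mul_add, add_mul, Matrix.mul_assoc,
    nonsing_inv_mul_cancel_left _ _ hdet, mul_nonsing_inv_cancel_left _ _ hdetT]

end Matrix

theorem riccati_change_of_variables
    {k s : Type*} [Fintype k] [DecidableEq k] [Fintype s]
    (S P : ℝ → Matrix k k ℝ) (t₀ : ℝ) (hS : IsUnit (S t₀))
    (M A : Matrix k k ℝ) (B : Matrix k s ℝ) (Q : Matrix s s ℝ)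
    (hS' : HasDerivAt S (S t₀ * M) t₀)
    (hP' : HasDerivAt P (A * P t₀ + P t₀ * Aᵀ + B * Q * Bᵀ) t₀) :
    let Pb := S t₀ * P t₀ * (S t₀)ᵀ
    let Ab := S t₀ * (A + M) * (S t₀)⁻¹
    let Bb := S t₀ * B
    HasDerivAt (fun t => S t * P t * (S t)ᵀ) (Ab * Pb + Pb * Abᵀ + Bb * Q * Bbᵀ) t₀ := by
  intro Pb Ab Bb
  refine (hS'.matrix_mul_mul_transpose hP').congr_deriv ?_
  change _ = riccatiField Ab Bb Q Pb
  rw [riccatiField_conj hS, riccatiField_add_left]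
  simp only [riccatiField, transpose_mul, mul_add, add_mul, Matrix.mul_assoc]
  abel
end

section
/- Let g, g_n : ℝ → (n×n real matrices) be curves differentiable at t₀ with g(t₀) and g_n(t₀) invertible, and suppose g'(t₀) = g(t₀)·V and g_n'(t₀) = g_n(t₀)·W for n×n real matrices V, W. Then the left-invariant error g_e(t) := g_n(t)⁻¹·g(t) is differentiable at t₀ with derivative g_e(t₀)·(V − g_e(t₀)⁻¹·W·g_e(t₀)). Equivalently, ġ_e = g_e·(V − Ad_{g_e}⁻¹ W). -/
/-!
Differentiate `g_n⁻¹ * g` by the product rule, using `d(x⁻¹) = -x⁻¹ dx x⁻¹` for the inverse in a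
complete normed algebra. With `g_e = g_n⁻¹ g` the result is `g_e V - W g_e`, which is
`g_e (V - g_e⁻¹ W g_e)` because `g_e` is invertible.
-/

open Matrix

attribute [local instance] Matrix.frobeniusNormedAddCommGroup Matrix.frobeniusNormedSpace

attribute [local instance] Matrix.frobeniusNormedRing Matrix.frobeniusNormedAlgebra

section NormedAlgebra

open Ring

variable {𝕜 R : Type*} [NontriviallyNormedField 𝕜] [NormedRing R] [HasSummableGeomSeries R]
  [NormedAlgebra 𝕜 R]

theorem HasDerivAt.ringInverse {f : 𝕜 → R} {f' : R} {t : 𝕜} (hf : HasDerivAt f f' t)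
    (ht : IsUnit (f t)) :
    HasDerivAt (fun s => (f s)⁻¹ʳ) (-((f t)⁻¹ʳ * f' * (f t)⁻¹ʳ)) t := by
  have hinv : HasFDerivAt Ring.inverse
      (-ContinuousLinearMap.mulLeftRight 𝕜 R (f t)⁻¹ʳ (f t)⁻¹ʳ) (f t) := by
    simpa only [← inverse_unit, IsUnit.unit_spec] using hasFDerivAt_ringInverse (𝕜 := 𝕜) ht.unit
  have h := hinv.comp_hasDerivAt t hf
  simp only [_root_.neg_apply, ContinuousLinearMap.mulLeftRight_apply] at h
  exact h

theorem HasDerivAt.ringInverse_mul_of_leftTrivialized {f g : 𝕜 → R} {t : 𝕜} {V W : R}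
    (hf_unit : IsUnit (f t)) (hg_unit : IsUnit (g t))
    (hf : HasDerivAt f (f t * W) t) (hg : HasDerivAt g (g t * V) t) :
    HasDerivAt (fun s => (f s)⁻¹ʳ * g s)
      ((f t)⁻¹ʳ * g t * (V - ((f t)⁻¹ʳ * g t)⁻¹ʳ * W * ((f t)⁻¹ʳ * g t))) t := by
  refine ((hf.ringInverse hf_unit).mul hg).congr_deriv ?_
  have he : IsUnit ((f t)⁻¹ʳ * g t) := hf_unit.ringInverse.mul hg_unit
  rw [mul_sub, mul_assoc _ W, mul_inverse_cancel_left _ _ he, inverse_mul_cancel_left _ _ hf_unit]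
  noncomm_ring

end NormedAlgebra

theorem left_invariant_error_dynamics
    {n : Type*} [Fintype n] [DecidableEq n]
    (g gn : ℝ → Matrix n n ℝ) (t₀ : ℝ) (V W : Matrix n n ℝ)
    (hg : IsUnit (g t₀)) (hgn : IsUnit (gn t₀))
    (hg' : HasDerivAt g (g t₀ * V) t₀) (hgn' : HasDerivAt gn (gn t₀ * W) t₀) :
    let ge := (gn t₀)⁻¹ * g t₀
    HasDerivAt (fun t => (gn t)⁻¹ * g t) (ge * (V - ge⁻¹ * W * ge)) t₀ := by
  simp only [Matrix.nonsing_inv_eq_ringInverse]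
  exact hgn'.ringInverse_mul_of_leftTrivialized hgn hg hg'
end

section
/- Let M denote the real inner product space of n×n real matrices with the Frobenius inner product. Let g be an invertible n×n real matrix, and let Ad_g : M → M be the continuous linear map X ↦ gXg⁻¹, with Hilbert adjoint Ad_g†. Let P : M → M and C : M → ℝ^m and R : ℝ^m → ℝ^m be continuous linear maps, and suppose T := C ∘ P ∘ C† + R is invertible as a linear map on ℝ^m. Define K := P ∘ C† ∘ T⁻¹, and, for a fixed vector e ∈ ℝ^m, ζ := K(e) ∈ M. Define the barred quantities P̄ := Ad_g ∘ P ∘ Ad_g†, C̄ := C ∘ Ad_{g⁻¹}, T̄ := C̄ ∘ P̄ ∘ C̄† + R, K̄ := P̄ ∘ C̄† ∘ T̄⁻¹, and ζ̄ := K̄(e). Then: (i) T̄ = T (in particular T̄ is invertible); (ii) K̄ = Ad_g ∘ K, so ζ̄ = g ζ g⁻¹; (iii) g·exp(ζ) = exp(ζ̄)·g; and (iv) Ad_{g·exp(ζ)} ∘ (J_ζ ∘ (id − K∘C) ∘ P ∘ J_ζ†) ∘ Ad_{g·exp(ζ)}† = J̄_{ζ̄} ∘ (id − K̄∘C̄)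 ∘ P̄ ∘ J̄_{ζ̄}†, where J_ζ : M → M is the map X ↦ ∫₀¹ exp(−sζ) X exp(sζ) ds and J̄_μ := J_{−μ}. -/
/-!
STATEMENT 14: Measurement-update half of Theorem 1 (equivalence of left- and right-invariant
LEKF updates).  M is the space of n×n real matrices with the Frobenius inner product
⟪A, B⟫ = trace(Aᵀ B); ℝ^m carries the Euclidean inner product.  Hilbert adjoints (with
respect to these inner products) are given as data, each characterized by its defining
property ⟪T x, y⟫ = ⟪x, T† y⟫.  The inverse of an invertible operator T on ℝ^m is
`Ring.inverse T` in the endomorphism ring.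
-/

open scoped Matrix

attribute [local instance] Matrix.frobeniusNormedAddCommGroup Matrix.frobeniusNormedSpace

/-- The Frobenius inner product on `n × n` real matrices. -/
def frobInner {n : Type*} [Fintype n] (A B : Matrix n n ℝ) : ℝ :=
  (Aᵀ * B).trace

/-- The Euclidean inner product on `ℝ^m`. -/
def eInner {m : ℕ} (x y : Fin m → ℝ) : ℝ :=
  ∑ i, x i * y i

/-- The adjoint action `Ad_g : X ↦ g X g⁻¹` as a linear map on `n × n` real matrices. -/
noncomputable def AdL {n : Type*} [Fintype n] [DecidableEq n] (g : Matrix n n ℝ) :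
    Matrix n n ℝ →ₗ[ℝ] Matrix n n ℝ where
  toFun X := g * X * g⁻¹
  map_add' X Y := by simp [Matrix.add_mul, Matrix.mul_add]
  map_smul' c X := by simp [Matrix.smul_mul, Matrix.mul_smul]

/-- The right group Jacobian `J_ζ : X ↦ ∫₀¹ exp(−sζ) X exp(sζ) ds`. -/
noncomputable def Jfun {n : Type*} [Fintype n] [DecidableEq n] (ζ X : Matrix n n ℝ) :
    Matrix n n ℝ :=
  ∫ s in (0:ℝ)..1, mexp (-(s • ζ)) * X * mexp (s • ζ)

/-!
Everything is equivariant under conjugation `Ad_g`. For the Frobenius inner product the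
adjoint of `Ad_g` is `Ad_{gᵀ}`, and adjoints are unique, so `C̄† = Ad_{g⁻ᵀ} C†` and
`Ad_g† C̄† = C†`; this gives `T̄ = T` and `K̄ = Ad_g K`, hence `ζ̄ = Ad_g ζ` and
`exp ζ̄ = Ad_g (exp ζ)`. For the covariance, `Ad_{exp ζ} J_ζ = J_{-ζ}` (substitute
`s ↦ 1 - s` in the integral) and `J_{Ad_g ζ} Ad_g = Ad_g J_ζ`, so
`Ad_{g exp ζ} J_ζ = J̄_{ζ̄} Ad_g`. Taking adjoints identifies `J̄_{ζ̄}†`, and both sides of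
(iv) become `J̄_{ζ̄} Ad_g (id - K C) P J_ζ† Ad_{g exp ζ}†`.
-/

attribute [local instance] Matrix.frobeniusNormedRing Matrix.frobeniusNormedAlgebra

section

variable {n : Type*} [Fintype n] [DecidableEq n]

theorem AdL_apply (g X : Matrix n n ℝ) : AdL g X = g * X * g⁻¹ := rfl

theorem AdL_mul_apply (a b X : Matrix n n ℝ) : AdL (a * b) X = AdL a (AdL b X) := by
  simp only [AdL_apply, Matrix.mul_inv_rev, Matrix.mul_assoc]

theorem AdL_inv_AdL {g : Matrix n n ℝ} (hg : IsUnit g) (X : Matrix n n ℝ) :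
    AdL g⁻¹ (AdL g X) = X := by
  have hg' := (Matrix.isUnit_iff_isUnit_det g).mp hg
  simp only [AdL_apply, Matrix.nonsing_inv_nonsing_inv g hg', Matrix.mul_assoc,
    Matrix.nonsing_inv_mul_cancel_left g _ hg', Matrix.nonsing_inv_mul _ hg', Matrix.mul_one]

theorem AdL_AdL_inv {g : Matrix n n ℝ} (hg : IsUnit g) (X : Matrix n n ℝ) :
    AdL g (AdL g⁻¹ X) = X := by
  have hg' := (Matrix.isUnit_iff_isUnit_det g).mp hg
  simp only [AdL_apply, Matrix.nonsing_inv_nonsing_inv g hg', Matrix.mul_assoc,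
    Matrix.mul_nonsing_inv_cancel_left g _ hg', Matrix.mul_nonsing_inv _ hg', Matrix.mul_one]

theorem AdL_mul_AdL {g : Matrix n n ℝ} (hg : IsUnit g) (X Y : Matrix n n ℝ) :
    AdL g X * AdL g Y = AdL g (X * Y) := by
  have hg' := (Matrix.isUnit_iff_isUnit_det g).mp hg
  simp only [AdL_apply, Matrix.mul_assoc, Matrix.nonsing_inv_mul_cancel_left g _ hg']

theorem mexp_AdL {g : Matrix n n ℝ} (hg : IsUnit g) (X : Matrix n n ℝ) :
    mexp (AdL g X) = AdL g (mexp X) :=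
  Matrix.exp_conj g X hg

theorem AdL_intervalIntegral (g : Matrix n n ℝ) {f : ℝ → Matrix n n ℝ} (hf : Continuous f)
    (a b : ℝ) : AdL g (∫ s in a..b, f s) = ∫ s in a..b, AdL g (f s) :=
  ((AdL g).toContinuousLinearMap.intervalIntegral_comp_comm
    (hf.intervalIntegrable a b)).symm

theorem frobInner_single_one_left (i j : n) (A : Matrix n n ℝ) :
    frobInner (Matrix.single i j 1) A = A i j := by
  simp [frobInner, Matrix.transpose_single, Matrix.trace_single_mul]

theorem eq_of_forall_frobInner_eq {A B : Matrix n n ℝ}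
    (h : ∀ X, frobInner X A = frobInner X B) : A = B := by
  ext i j
  simpa only [frobInner_single_one_left] using h (Matrix.single i j 1)

theorem frobInner_AdL (g X Y : Matrix n n ℝ) :
    frobInner (AdL g X) Y = frobInner X (AdL gᵀ Y) := by
  simp only [frobInner, AdL_apply, Matrix.transpose_mul, ← Matrix.transpose_nonsing_inv]
  rw [Matrix.mul_assoc, Matrix.trace_mul_comm]
  simp only [Matrix.mul_assoc]

theorem eq_AdL_transpose_of_frobInner {g Y Z : Matrix n n ℝ}
    (h : ∀ X, frobInner (AdL g X) Y = frobInner X Z) : Z = AdL gᵀ Y :=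
  eq_of_forall_frobInner_eq fun X => by rw [← h X, frobInner_AdL]

theorem AdL_transpose_AdL_inv_transpose {g : Matrix n n ℝ} (hg : IsUnit g) (X : Matrix n n ℝ) :
    AdL gᵀ (AdL g⁻¹ᵀ X) = X := by
  rw [Matrix.transpose_nonsing_inv]
  exact AdL_AdL_inv ((Matrix.isUnit_transpose g).mpr hg) X

theorem continuous_mexp : Continuous (mexp : Matrix n n ℝ → Matrix n n ℝ) :=
  NormedSpace.exp_continuous

theorem mexp_smul_mul_mexp_smul (ζ : Matrix n n ℝ) (s t : ℝ) :
    mexp (s • ζ) * mexp (t • ζ) = mexp ((s + t) • ζ) := by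
  rw [mexp, mexp, mexp, add_smul, Matrix.exp_add_of_commute]
  exact ((Commute.refl ζ).smul_left s).smul_right t

theorem continuous_Jfun_integrand (ζ X : Matrix n n ℝ) :
    Continuous fun s : ℝ => mexp (-(s • ζ)) * X * mexp (s • ζ) := by
  have hexp : Continuous fun s : ℝ => mexp (s • ζ) :=
    continuous_mexp.comp (continuous_id.smul continuous_const)
  simp only [← neg_smul]
  exact ((hexp.comp continuous_neg).mul continuous_const).mul hexp

theorem Jfun_AdL {g : Matrix n n ℝ} (hg : IsUnit g) (ζ X : Matrix n n ℝ) :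
    Jfun (AdL g ζ) (AdL g X) = AdL g (Jfun ζ X) := by
  rw [Jfun, Jfun, AdL_intervalIntegral g (continuous_Jfun_integrand ζ X)]
  refine intervalIntegral.integral_congr fun s _ => ?_
  simp only [← map_smul, ← map_neg, mexp_AdL hg, AdL_mul_AdL hg]

theorem AdL_mexp_Jfun (ζ X : Matrix n n ℝ) : AdL (mexp ζ) (Jfun ζ X) = Jfun (-ζ) X := by
  set F : ℝ → Matrix n n ℝ := fun t => mexp (t • ζ) * X * mexp ((-t) • ζ)
  have hinv : (mexp ζ)⁻¹ = mexp ((-1 : ℝ) • ζ) := by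
    rw [mexp, mexp, neg_one_smul, Matrix.exp_neg]
  have hshift : ∀ s : ℝ, AdL (mexp ζ) (mexp (-(s • ζ)) * X * mexp (s • ζ)) = F (1 - s) := by
    intro s
    have h1 : mexp ζ = mexp ((1 : ℝ) • ζ) := by rw [one_smul]
    rw [AdL_apply, hinv, h1, ← neg_smul]
    simp only [F, Matrix.mul_assoc, mexp_smul_mul_mexp_smul]
    rw [← Matrix.mul_assoc, mexp_smul_mul_mexp_smul, show (1 : ℝ) + -s = 1 - s by ring, show s + -1 = -(1 - s) by ring]
  calc AdL (mexp ζ) (Jfun ζ X) = ∫ s in (0 : ℝ)..1, F (1 - s) := by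
        rw [Jfun, AdL_intervalIntegral _ (continuous_Jfun_integrand ζ X)]
        exact intervalIntegral.integral_congr fun s _ => hshift s
    _ = ∫ s in (0 : ℝ)..1, F s := by
        rw [intervalIntegral.integral_comp_sub_left F 1]
        norm_num
    _ = Jfun (-ζ) X := by
        simp only [Jfun, F, smul_neg, neg_neg, neg_smul]

theorem AdL_mul_mexp_Jfun {g : Matrix n n ℝ} (hg : IsUnit g) (ζ X : Matrix n n ℝ) :
    AdL (g * mexp ζ) (Jfun ζ X) = Jfun (-AdL g ζ) (AdL g X) := by
  rw [AdL_mul_apply, AdL_mexp_Jfun, ← map_neg, Jfun_AdL hg]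

end

theorem lekf_update_equivalence
    {n : Type*} [Fintype n] [DecidableEq n] {m : ℕ}
    -- the state estimate
    (g : Matrix n n ℝ) (hg : IsUnit g)
    -- the operators P, C, R
    (P : Matrix n n ℝ →ₗ[ℝ] Matrix n n ℝ)
    (C : Matrix n n ℝ →ₗ[ℝ] (Fin m → ℝ))
    (R : (Fin m → ℝ) →ₗ[ℝ] (Fin m → ℝ))
    -- the adjoint of C
    (Cadj : (Fin m → ℝ) →ₗ[ℝ] Matrix n n ℝ)
    (hCadj : ∀ X y, eInner (C X) y = frobInner X (Cadj y))
    -- the adjoint of Ad_g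
    (AdgAdj : Matrix n n ℝ →ₗ[ℝ] Matrix n n ℝ)
    (hAdgAdj : ∀ X Y, frobInner (AdL g X) Y = frobInner X (AdgAdj Y))
    -- T := C ∘ P ∘ C† + R, assumed invertible
    (T : (Fin m → ℝ) →ₗ[ℝ] (Fin m → ℝ)) (hT : T = C ∘ₗ P ∘ₗ Cadj + R)
    (hTunit : IsUnit T)
    -- K := P ∘ C† ∘ T⁻¹ and ζ := K e
    (K : (Fin m → ℝ) →ₗ[ℝ] Matrix n n ℝ) (hK : K = P ∘ₗ Cadj ∘ₗ Ring.inverse T)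
    (e : Fin m → ℝ) (ζ : Matrix n n ℝ) (hζ : ζ = K e)
    -- barred quantities: P̄ := Ad_g ∘ P ∘ Ad_g†, C̄ := C ∘ Ad_{g⁻¹}
    (Pb : Matrix n n ℝ →ₗ[ℝ] Matrix n n ℝ) (hPb : Pb = AdL g ∘ₗ P ∘ₗ AdgAdj)
    (Cb : Matrix n n ℝ →ₗ[ℝ] (Fin m → ℝ)) (hCb : Cb = C ∘ₗ AdL g⁻¹)
    -- the adjoint of C̄
    (CbAdj : (Fin m → ℝ) →ₗ[ℝ] Matrix n n ℝ)
    (hCbAdj : ∀ X y, eInner (Cb X) y = frobInner X (CbAdj y))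
    -- T̄ := C̄ ∘ P̄ ∘ C̄† + R, K̄ := P̄ ∘ C̄† ∘ T̄⁻¹, ζ̄ := K̄ e
    (Tb : (Fin m → ℝ) →ₗ[ℝ] (Fin m → ℝ)) (hTb : Tb = Cb ∘ₗ Pb ∘ₗ CbAdj + R)
    (Kb : (Fin m → ℝ) →ₗ[ℝ] Matrix n n ℝ) (hKb : Kb = Pb ∘ₗ CbAdj ∘ₗ Ring.inverse Tb)
    (ζb : Matrix n n ℝ) (hζb : ζb = Kb e)
    -- the adjoints of J_ζ, J̄_{ζ̄} = J_{−ζ̄}, and Ad_{g·exp(ζ)}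
    (JAdj : Matrix n n ℝ → Matrix n n ℝ)
    (hJAdj : ∀ X Y, frobInner (Jfun ζ X) Y = frobInner X (JAdj Y))
    (JbAdj : Matrix n n ℝ → Matrix n n ℝ)
    (hJbAdj : ∀ X Y, frobInner (Jfun (-ζb) X) Y = frobInner X (JbAdj Y))
    (AdgEAdj : Matrix n n ℝ → Matrix n n ℝ)
    (hAdgEAdj : ∀ X Y,
      frobInner ((g * mexp ζ) * X * (g * mexp ζ)⁻¹) Y = frobInner X (AdgEAdj Y)) :
    -- (i) T̄ = T, in particular T̄ is invertible
    (Tb = T ∧ IsUnit Tb) ∧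
    -- (ii) K̄ = Ad_g ∘ K, so ζ̄ = g ζ g⁻¹
    (Kb = AdL g ∘ₗ K ∧ ζb = g * ζ * g⁻¹) ∧
    -- (iii) g·exp(ζ) = exp(ζ̄)·g
    g * mexp ζ = mexp ζb * g ∧
    -- (iv) Ad_{g·exp(ζ)} ∘ (J_ζ ∘ (id − K∘C) ∘ P ∘ J_ζ†) ∘ Ad_{g·exp(ζ)}†
    --        = J̄_{ζ̄} ∘ (id − K̄∘C̄) ∘ P̄ ∘ J̄_{ζ̄}†
    (∀ X, (g * mexp ζ) *
        Jfun ζ (P (JAdj (AdgEAdj X)) - K (C (P (JAdj (AdgEAdj X))))) *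
        (g * mexp ζ)⁻¹
      = Jfun (-ζb) (Pb (JbAdj X) - Kb (Cb (Pb (JbAdj X))))) := by
  have hAdgAdj' : ∀ Y, AdgAdj Y = AdL gᵀ Y := fun Y =>
    eq_AdL_transpose_of_frobInner fun X => hAdgAdj X Y
  have hCbAdj' : ∀ y, CbAdj y = AdL g⁻¹ᵀ (Cadj y) := fun y =>
    eq_AdL_transpose_of_frobInner fun X => by
      rw [← hCbAdj, hCb, LinearMap.comp_apply, hCadj]
  have hPbCbAdj : ∀ y, Pb (CbAdj y) = AdL g (P (Cadj y)) := fun y => by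
    rw [hPb, LinearMap.comp_apply, LinearMap.comp_apply, hCbAdj', hAdgAdj',
      AdL_transpose_AdL_inv_transpose hg]
  have hTbT : Tb = T := by
    ext y
    simp only [hTb, hT, hCb, LinearMap.add_apply, LinearMap.comp_apply, hPbCbAdj,
      AdL_inv_AdL hg]
  have hKbK : Kb = AdL g ∘ₗ K := by
    ext y
    simp only [hKb, hK, hTbT, LinearMap.comp_apply, hPbCbAdj]
  have hζbζ : ζb = AdL g ζ := by rw [hζb, hKbK, hζ, LinearMap.comp_apply]
  have hJ : ∀ Z, AdL (g * mexp ζ) (Jfun ζ Z) = Jfun (-ζb) (AdL g Z) := fun Z => by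
    rw [hζbζ, AdL_mul_mexp_Jfun hg]
  have hJbAdj' : ∀ Y, JbAdj Y = AdL g⁻¹ᵀ (JAdj (AdgEAdj Y)) := fun Y =>
    eq_of_forall_frobInner_eq fun X => calc
      frobInner X (JbAdj Y) = frobInner (AdL (g * mexp ζ) (Jfun ζ (AdL g⁻¹ X))) Y := by
        rw [← hJbAdj, hJ, AdL_AdL_inv hg]
      _ = frobInner (AdL g⁻¹ X) (JAdj (AdgEAdj Y)) := by rw [AdL_apply, hAdgEAdj, hJAdj]
      _ = frobInner X (AdL g⁻¹ᵀ (JAdj (AdgEAdj Y))) := frobInner_AdL _ _ _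
  refine ⟨⟨hTbT, hTbT ▸ hTunit⟩, ⟨hKbK, hζbζ⟩, ?_, fun X => ?_⟩
  · rw [hζbζ, mexp_AdL hg, AdL_apply,
      Matrix.nonsing_inv_mul_cancel_right _ _ ((Matrix.isUnit_iff_isUnit_det g).mp hg)]
  · have hPbJbAdj : Pb (JbAdj X) = AdL g (P (JAdj (AdgEAdj X))) := by
      rw [hPb, LinearMap.comp_apply, LinearMap.comp_apply, hJbAdj', hAdgAdj',
        AdL_transpose_AdL_inv_transpose hg]
    rw [hPbJbAdj, hCb, LinearMap.comp_apply, AdL_inv_AdL hg, hKbK, LinearMap.comp_apply,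
      ← map_sub, ← hJ, AdL_apply]
end
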